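/- arXiv:1611.08477 — 4 statements merged into one kernel-verified Lean document; each statement's English description precedes it below -/
import Mathlib

section
/- Let p ≥ 3 be prime and let 1 ≤ r₁ ≤ ⋯ ≤ r_β ≤ p-1 be integers with p dividing Σ r_j. Define H(k) = Σ_{j=1}^{β} {k r_j / p}, where {·} is the fractional part. If there is an integer 1 ≤ θ ≤ p-1 such that H(k) = 1 for all 1 ≤ k ≤ θ, then β ≤ p and θ ≤ ⌊p/(β-1)⌋. -/
/-- Let `p ≥ 3` be prime and `1 ≤ r₁ ≤ ⋯ ≤ r_β ≤ p - 1` integers with `p` dividing `∑ r_j`.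
Define `H(k) = ∑_{j=1}^β {k r_j / p}` where `{·}` is the fractional part.  If there is an
integer `1 ≤ θ ≤ p - 1` such that `H(k) = 1` for all `1 ≤ k ≤ θ`, then `β ≤ p` and
`θ ≤ ⌊p / (β - 1)⌋`. -/
theorem monodromy_fractional_part_lemma
    (p β θ : ℕ) (hp : p.Prime) (hp3 : 3 ≤ p)
    (r : Fin β → ℕ) (hmono : Monotone r)
    (hr : ∀ j, 1 ≤ r j ∧ r j ≤ p - 1)
    (hdvd : p ∣ ∑ j, r j)
    (hθ1 : 1 ≤ θ) (hθ2 : θ ≤ p - 1)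
    (hH : ∀ k, 1 ≤ k → k ≤ θ →
      ∑ j, Int.fract ((k : ℚ) * (r j : ℚ) / (p : ℚ)) = 1) :
    β ≤ p ∧ θ ≤ p / (β - 1) := by
  have hp0 : 0 < p := hp.pos
  -- the residue `(k * r j) % p` is nonzero for `1 ≤ k ≤ p - 1`
  have hres : ∀ k : ℕ, 1 ≤ k → k ≤ p - 1 → ∀ j, 1 ≤ (k * r j) % p := by
    intro k hk1 hk2 j
    rcases Nat.eq_zero_or_pos ((k * r j) % p) with h | h
    · exfalso
      have hd : p ∣ k * r j := Nat.dvd_of_mod_eq_zero h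
      rcases (Nat.Prime.dvd_mul hp).mp hd with h' | h'
      · have := Nat.le_of_dvd (by omega) h'; omega
      · have h1 := (hr j).1; have h2 := (hr j).2
        have := Nat.le_of_dvd (by omega) h'; omega
    · exact h
  -- convert the hypothesis to a statement about natural number residues
  have key : ∀ k : ℕ, 1 ≤ k → k ≤ θ → ∑ j, (k * r j) % p = p := by
    intro k hk1 hk2
    have h := hH k hk1 hk2
    have h2 : ∀ j, Int.fract ((k : ℚ) * (r j) / p) = ((k * r j) % p : ℕ) / (p : ℚ) := by
      intro j
      have e : (k : ℚ) * (r j) / p = ((k * r j : ℕ) : ℚ) / ((p : ℕ) : ℚ) := by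
        push_cast; ring
      rw [e, Int.fract_div_natCast_eq_div_natCast_mod]
    rw [Finset.sum_congr rfl (fun j _ => h2 j)] at h
    rw [← Finset.sum_div, div_eq_one_iff_eq (by positivity)] at h
    exact_mod_cast h
  -- `∑ r j = p`
  have hsum : ∑ j, r j = p := by
    have h := key 1 le_rfl hθ1
    have : ∀ j, (1 * r j) % p = r j := by
      intro j
      have h2 := (hr j).2
      rw [one_mul, Nat.mod_eq_of_lt (by omega)]
    rwa [Finset.sum_congr rfl (fun j _ => this j)] at h
  -- `β ≤ p`
  have hβp : β ≤ p := by
    calc β = ∑ _j : Fin β, 1 := by simp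
    _ ≤ ∑ j, r j := Finset.sum_le_sum (fun j _ => (hr j).1)
    _ = p := hsum
  -- `2 ≤ β`
  have hβ2 : 2 ≤ β := by
    by_contra h
    interval_cases β
    · simp at hsum; omega
    · have h1 := (hr 0).2
      rw [Fin.sum_univ_one] at hsum
      omega
  refine ⟨hβp, ?_⟩
  rcases eq_or_lt_of_le hθ1 with h1 | hθg
  · -- θ = 1
    rw [← h1]
    rw [Nat.le_div_iff_mul_le (by omega)]
    omega
  -- θ ≥ 2 : set s = p % θ, q = p / θ
  have hθp : θ < p := by omega
  have hs0 : p % θ ≠ 0 := by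
    intro h
    have hd : θ ∣ p := Nat.dvd_of_mod_eq_zero h
    rcases (Nat.Prime.eq_one_or_self_of_dvd hp θ hd) with h' | h' <;> omega
  have hsθ : p % θ < θ := Nat.mod_lt _ (by omega)
  have hq1 : 1 ≤ p / θ := Nat.one_le_div_iff (by omega) |>.mpr (by omega)
  have hA := key θ hθ1 le_rfl
  have hB := key (p % θ) (by omega) (by omega)
  -- each combined term is at least p
  have hterm : ∀ j, p ≤ (p / θ) * ((θ * r j) % p) + ((p % θ) * r j) % p := by
    intro j
    have hApos := hres θ hθ1 hθ2 j
    have hBpos := hres (p % θ) (by omega) (by omega) j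
    have hdvd2 : p ∣ (p / θ) * ((θ * r j) % p) + ((p % θ) * r j) % p := by
      have m1 : ((θ * r j) % p) ≡ θ * r j [MOD p] := Nat.mod_modEq _ _
      have m2 : (((p % θ) * r j) % p) ≡ (p % θ) * r j [MOD p] := Nat.mod_modEq _ _
      have m3 : (p / θ) * ((θ * r j) % p) + ((p % θ) * r j) % p ≡
          (p / θ) * (θ * r j) + (p % θ) * r j [MOD p] :=
        Nat.ModEq.add (Nat.ModEq.mul_left _ m1) m2
      have e : (p / θ) * (θ * r j) + (p % θ) * r j = p * r j := by
        have := Nat.div_add_mod p θ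
        calc (p / θ) * (θ * r j) + (p % θ) * r j = (θ * (p / θ) + p % θ) * r j := by ring
        _ = p * r j := by rw [this]
      rw [e] at m3
      have : (p / θ) * ((θ * r j) % p) + ((p % θ) * r j) % p ≡ 0 [MOD p] := by
        calc (p / θ) * ((θ * r j) % p) + ((p % θ) * r j) % p ≡ p * r j [MOD p] := m3
        _ ≡ 0 [MOD p] := Nat.modEq_zero_iff_dvd.mpr ⟨r j, rfl⟩
      exact Nat.modEq_zero_iff_dvd.mp this
    refine Nat.le_of_dvd ?_ hdvd2
    have : 1 ≤ (p / θ) * ((θ * r j) % p) := Nat.one_le_iff_ne_zero.mpr (by positivity)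
    omega
  -- sum up
  have hsum2 : ∑ j, ((p / θ) * ((θ * r j) % p) + ((p % θ) * r j) % p) = (p / θ + 1) * p := by
    rw [Finset.sum_add_distrib, ← Finset.mul_sum, hA, hB]; ring
  have hβq : β * p ≤ (p / θ + 1) * p := by
    calc β * p = ∑ _j : Fin β, p := by simp [mul_comm]
    _ ≤ ∑ j, ((p / θ) * ((θ * r j) % p) + ((p % θ) * r j) % p) :=
        Finset.sum_le_sum (fun j _ => hterm j)
    _ = (p / θ + 1) * p := hsum2
  have hβq2 : β ≤ p / θ + 1 := Nat.le_of_mul_le_mul_right hβq hp0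
  have hfinal : (β - 1) * θ ≤ p := by
    have : β - 1 ≤ p / θ := by omega
    exact (Nat.le_div_iff_mul_le (by omega)).mp this
  rw [Nat.le_div_iff_mul_le (by omega), mul_comm]
  exact hfinal
end

section
/- Let p ≥ 3 be prime, β ≥ 3, and 1 ≤ r₁ ≤ ⋯ ≤ r_β ≤ p-1 integers with p | Σ r_j. Suppose H(k) = Σ_j {k r_j/p} = 1 for all 1 ≤ k ≤ t₁ where t₁ = ⌊p / r_{β-1}⌋, and suppose r_j = 1 for all j ≤ β-2 and r_{β-1} < p/2. Then p ≥ t₁(t₁+1)(β-2) + 2t₁ + 1. -/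
/-- Let `p ≥ 3` be prime, `β ≥ 3`, and `1 ≤ r₁ ≤ ⋯ ≤ r_β ≤ p - 1` integers with
`p ∣ ∑ r_j`.  Suppose `H(k) = ∑_j {k r_j / p} = 1` for all `1 ≤ k ≤ t₁` where
`t₁ = ⌊p / r_{β-1}⌋`, and suppose `r_j = 1` for all `j ≤ β - 2` and `r_{β-1} < p/2`.
Then `p ≥ t₁(t₁+1)(β-2) + 2t₁ + 1`.  (Indices are 1-based: `r_i` is `r ⟨i-1⟩`.) -/
theorem step_three_lower_bound
    (p β : ℕ) (hp : p.Prime) (hp3 : 3 ≤ p) (hβ : 3 ≤ β)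
    (r : Fin β → ℕ) (hmono : Monotone r)
    (hr : ∀ j, 1 ≤ r j ∧ r j ≤ p - 1)
    (hdvd : p ∣ ∑ j, r j)
    (hr1 : ∀ j : Fin β, (j : ℕ) ≤ β - 3 → r j = 1)
    (hhalf : 2 * r ⟨β - 2, by omega⟩ < p)
    (hH : ∀ k, 1 ≤ k → k ≤ p / r ⟨β - 2, by omega⟩ →
      ∑ j, Int.fract ((k : ℚ) * (r j : ℚ) / (p : ℚ)) = 1) :
    p ≥ (p / r ⟨β - 2, by omega⟩) * (p / r ⟨β - 2, by omega⟩ + 1) * (β - 2)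
        + 2 * (p / r ⟨β - 2, by omega⟩) + 1 := by
  have hβ1 : β - 2 < β := by omega
  have hβ2 : β - 1 < β := by omega
  set i1 : Fin β := ⟨β - 2, hβ1⟩ with hi1
  set i2 : Fin β := ⟨β - 1, hβ2⟩ with hi2
  set a : ℕ := r i1 with ha
  set b : ℕ := r i2 with hb
  -- convert hH to a statement about mods
  have hHm : ∀ k, 1 ≤ k → k ≤ p / a → ∑ j, (k * r j) % p = p := by
    intro k hk1 hk2
    have h := hH k hk1 hk2
    have h2 : ∀ j, Int.fract ((k : ℚ) * (r j : ℚ) / (p : ℚ))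
        = (((k * r j) % p : ℕ) : ℚ) / p := by
      intro j
      rw [show (k : ℚ) * (r j : ℚ) / (p : ℚ) = ((k * r j : ℕ) : ℚ) / p by push_cast; ring]
      exact Int.fract_div_natCast_eq_div_natCast_mod
    rw [Finset.sum_congr rfl (fun j _ => h2 j), ← Finset.sum_div] at h
    have hp' : (p : ℚ) ≠ 0 := by positivity
    field_simp at h
    exact_mod_cast h
  have hb1 : 1 ≤ b := (hr i2).1
  have hb2 : b ≤ p - 1 := (hr i2).2
  have ha1 : 1 ≤ a := (hr i1).1
  -- rule out a = 1
  have ha2 : 2 ≤ a := by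
    by_contra hcon
    have ha' : a = 1 := by omega
    have hk2 : p - 1 ≤ p / a := by rw [ha', Nat.div_one]; omega
    have hsum := hHm (p - 1) (by omega) hk2
    have h0 : (⟨0, by omega⟩ : Fin β) ≠ (⟨1, by omega⟩ : Fin β) := by
      simp [Fin.ext_iff]
    have hr0 : r ⟨0, by omega⟩ = 1 := by
      have hle : r ⟨0, by omega⟩ ≤ a := hmono (by rw [hi1]; exact Fin.mk_le_mk.mpr (by omega))
      have := (hr ⟨0, by omega⟩).1
      omega
    have hr01 : r ⟨1, by omega⟩ = 1 := by
      have hle : r ⟨1, by omega⟩ ≤ a := hmono (by rw [hi1]; exact Fin.mk_le_mk.mpr (by omega))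
      have := (hr ⟨1, by omega⟩).1
      omega
    have hsub : ({⟨0, by omega⟩, ⟨1, by omega⟩} : Finset (Fin β)) ⊆ Finset.univ :=
      Finset.subset_univ _
    have hle : ∑ j ∈ ({⟨0, by omega⟩, ⟨1, by omega⟩} : Finset (Fin β)),
        ((p - 1) * r j) % p ≤ ∑ j, ((p - 1) * r j) % p :=
      Finset.sum_le_sum_of_subset hsub
    rw [Finset.sum_pair h0, hr0, hr01, hsum] at hle
    rw [Nat.mul_one, Nat.mod_eq_of_lt (by omega)] at hle
    omega
  -- basic facts about t = p / a
  set t : ℕ := p / a with htdef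
  have hta : t * a ≤ p := Nat.div_mul_le_self p a
  have htane : t * a ≠ p := by
    intro hcon
    have : a ∣ p := ⟨t, by rw [← hcon]; ring⟩
    rcases (Nat.Prime.eq_one_or_self_of_dvd hp a this) with h | h <;> omega
  have ht2 : 2 ≤ t := by
    rw [htdef, Nat.le_div_iff_mul_le (by omega)]
    omega
  have htp : t < p := by nlinarith
  have htalt : t * a < p := by omega
  -- the main sum identity at k = t, after splitting off i1, i2
  have hi12 : i2 ≠ i1 := by simp [hi1, hi2, Fin.ext_iff]; omega
  have hsum := hHm t (by omega) (le_refl _)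
  set f : Fin β → ℕ := fun j => (t * r j) % p with hf
  have hsplit1 : ∑ j ∈ Finset.univ.erase i1, f j + f i1 = ∑ j, f j :=
    Finset.sum_erase_add _ _ (Finset.mem_univ i1)
  have hmem2 : i2 ∈ Finset.univ.erase i1 := Finset.mem_erase.mpr ⟨hi12, Finset.mem_univ _⟩
  have hsplit2 : ∑ j ∈ (Finset.univ.erase i1).erase i2, f j + f i2
      = ∑ j ∈ Finset.univ.erase i1, f j :=
    Finset.sum_erase_add _ _ hmem2
  -- on the remaining set, r j = 1
  have hconst : ∀ j ∈ (Finset.univ.erase i1).erase i2, f j = t % p := by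
    intro j hj
    rw [Finset.mem_erase, Finset.mem_erase] at hj
    have hj1 : (j : ℕ) ≠ β - 1 := by
      intro hc; exact hj.1 (by simp [hi2, Fin.ext_iff, hc])
    have hj2 : (j : ℕ) ≠ β - 2 := by
      intro hc; exact hj.2.1 (by simp [hi1, Fin.ext_iff, hc])
    have := j.isLt
    have hrj : r j = 1 := hr1 j (by omega)
    simp [hf, hrj]
  have hcard : ((Finset.univ.erase i1).erase i2).card = β - 2 := by
    rw [Finset.card_erase_of_mem hmem2, Finset.card_erase_of_mem (Finset.mem_univ _)]
    simp only [Finset.card_univ, Fintype.card_fin]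
    omega
  have hsumconst : ∑ j ∈ (Finset.univ.erase i1).erase i2, f j = (β - 2) * (t % p) := by
    rw [Finset.sum_congr rfl hconst, Finset.sum_const, hcard, smul_eq_mul]
  -- evaluate the pieces
  have hfi1 : f i1 = t * a := by
    simp only [hf, ← ha]
    exact Nat.mod_eq_of_lt htalt
  have htmod : t % p = t := Nat.mod_eq_of_lt htp
  have hfi2pos : 1 ≤ f i2 := by
    simp only [hf, ← hb]
    have hnd : ¬ p ∣ t * b := by
      intro hdvd'
      rcases (Nat.Prime.dvd_mul hp).mp hdvd' with h | h
      · exact absurd (Nat.le_of_dvd (by omega) h) (by omega)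
      · exact absurd (Nat.le_of_dvd (by omega) h) (by omega)
    have hne : (t * b) % p ≠ 0 := fun h => hnd (Nat.dvd_of_mod_eq_zero h)
    omega
  -- key inequality
  have hkey : (β - 2) * t + t * a + 1 ≤ p := by
    have heq : (β - 2) * (t % p) + f i2 + f i1 = p := by
      rw [← hsumconst, hsplit2, hsplit1]
      exact hsum
    rw [hfi1, htmod] at heq
    omega
  -- second inequality: p < (t+1)*a
  have hmd : p % a + t * a = p := by rw [htdef]; exact Nat.mod_add_div' p a
  have hmlt : p % a < a := Nat.mod_lt p (by omega)
  have hkey2 : p < (t + 1) * a := by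
    have hexp : (t + 1) * a = t * a + a := by ring
    omega
  -- conclude
  have hmul1 : (t + 1) * ((β - 2) * t + t * a + 1) ≤ (t + 1) * p :=
    Nat.mul_le_mul_left _ hkey
  have hmul2 : t * p < t * ((t + 1) * a) := by
    have ht0 : 0 < t := by omega
    exact (mul_lt_mul_iff_right₀ ht0).mpr hkey2
  nlinarith [hmul1, hmul2]
end

section
/- Let n ≥ 2, α₀ ≥ 3 integers, and define g = (n-1)(α₀-2)/2 if n | α₀ and g = ((n-1)(α₀-2) + (n - gcd(α₀,n)))/2 otherwise. Define r(i) as: r(i) = (n-i)α₀/n - 1 if (n-i)α₀/n ∈ ℤ, and r(i) = ⌊(n-i)α₀/n⌋ otherwise. Then Σ_{i=1}^{n-1} r(i) = g. -/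
/-- The rank of the `i`-th eigenspace of the space of holomorphic 1-forms of the
`n`-superelliptic curve `y^n = F(x)` with `deg F = α₀`:
`r(i) = (n-i)α₀/n - 1` if `(n-i)α₀/n ∈ ℤ` and `r(i) = ⌊(n-i)α₀/n⌋` otherwise. -/
def superellipticRank (n α₀ i : ℕ) : ℕ :=
  if n ∣ (n - i) * α₀ then (n - i) * α₀ / n - 1 else (n - i) * α₀ / n

private lemma pair_sum (n α₀ j : ℕ) (hn : 2 ≤ n) (hα₀ : 3 ≤ α₀)
    (hj1 : 1 ≤ j) (hj2 : j ≤ n - 1) :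
    superellipticRank n α₀ (n - j) + superellipticRank n α₀ j
      = if n ∣ j * α₀ then α₀ - 2 else α₀ - 1 := by
  have hn0 : 0 < n := by omega
  have hnj : n - (n - j) = j := by omega
  unfold superellipticRank
  rw [hnj]
  have hab : j * α₀ + (n - j) * α₀ = n * α₀ := by
    rw [← Nat.add_mul]; congr 1; omega
  have hndvd : n ∣ j * α₀ + (n - j) * α₀ := hab ▸ Dvd.intro α₀ rfl
  by_cases h : n ∣ j * α₀
  · have hb : n ∣ (n - j) * α₀ := by simpa using Nat.dvd_sub hndvd h
    simp only [h, hb, if_true]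
    obtain ⟨qa, hqa⟩ := h
    obtain ⟨qb, hqb⟩ := hb
    rw [hqa, hqb] at hab ⊢
    rw [Nat.mul_div_cancel_left _ hn0, Nat.mul_div_cancel_left _ hn0]
    have hsum : qa + qb = α₀ := by
      rw [← Nat.mul_add] at hab
      exact Nat.eq_of_mul_eq_mul_left hn0 hab
    have hqa1 : 1 ≤ qa := by
      rcases Nat.eq_zero_or_pos qa with h0 | h1
      · exfalso; rw [h0, Nat.mul_zero] at hqa
        have : 0 < j * α₀ := Nat.mul_pos (by omega) (by omega)
        omega
      · exact h1
    have hqb1 : 1 ≤ qb := by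
      rcases Nat.eq_zero_or_pos qb with h0 | h1
      · exfalso; rw [h0, Nat.mul_zero] at hqb
        have : 0 < (n - j) * α₀ := Nat.mul_pos (by omega) (by omega)
        omega
      · exact h1
    omega
  · have hb : ¬ n ∣ (n - j) * α₀ := by
      intro hb
      exact h (by simpa [Nat.add_sub_cancel] using Nat.dvd_sub hndvd hb)
    simp only [h, hb, if_false]
    have hmod := Nat.div_add_mod (j * α₀) n
    set qa := j * α₀ / n with hqadef
    set ra := j * α₀ % n with hradef
    have hra0 : ra ≠ 0 := fun h0 => h (Nat.dvd_of_mod_eq_zero h0)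
    have hralt : ra < n := Nat.mod_lt _ hn0
    have hqalt : qa < α₀ := by
      rw [hqadef]
      rw [Nat.div_lt_iff_lt_mul hn0]
      have : j < n := by omega
      calc j * α₀ < n * α₀ := Nat.mul_lt_mul_of_pos_right this (by omega)
        _ = α₀ * n := Nat.mul_comm _ _
    set k := α₀ - 1 - qa with hkdef
    have hk : α₀ = qa + k + 1 := by omega
    have hnk : n * α₀ = n * qa + n * k + n := by rw [hk]; ring
    have hb2 : (n - j) * α₀ = n * k + (n - ra) := by omega
    rw [hb2, Nat.mul_add_div hn0, Nat.div_eq_of_lt (by omega)]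
    omega

/-- Let `n ≥ 2`, `α₀ ≥ 3` and let `g = (n-1)(α₀-2)/2` if `n ∣ α₀`, and
`g = ((n-1)(α₀-2) + (n - gcd(α₀,n)))/2` otherwise.  Then `∑_{i=1}^{n-1} r(i) = g`. -/
theorem eigenrank_sum_eq_genus
    (n α₀ : ℕ) (hn : 2 ≤ n) (hα₀ : 3 ≤ α₀) :
    ∑ i ∈ Finset.Icc 1 (n - 1), superellipticRank n α₀ i
      = if n ∣ α₀ then (n - 1) * (α₀ - 2) / 2
        else ((n - 1) * (α₀ - 2) + (n - Nat.gcd α₀ n)) / 2 := by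
  have hn0 : 0 < n := by omega
  set S := ∑ i ∈ Finset.Icc 1 (n - 1), superellipticRank n α₀ i with hS
  -- reindex by the involution i ↦ n - i
  have hswap : S = ∑ i ∈ Finset.Icc 1 (n - 1), superellipticRank n α₀ (n - i) := by
    rw [hS]
    refine Finset.sum_nbij' (fun i => n - i) (fun i => n - i) ?_ ?_ ?_ ?_ ?_
    · intro a ha; simp only [Finset.mem_Icc] at ha ⊢; omega
    · intro a ha; simp only [Finset.mem_Icc] at ha ⊢; omega
    · intro a ha; simp only [Finset.mem_Icc] at ha; show n - (n - a) = a; omega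
    · intro a ha; simp only [Finset.mem_Icc] at ha; show n - (n - a) = a; omega
    · intro a ha
      simp only [Finset.mem_Icc] at ha
      show superellipticRank n α₀ a = superellipticRank n α₀ (n - (n - a))
      have : n - (n - a) = a := by omega
      rw [this]
  have h2S : 2 * S = ∑ i ∈ Finset.Icc 1 (n - 1),
      (if n ∣ i * α₀ then α₀ - 2 else α₀ - 1) := by
    rw [two_mul]
    nth_rewrite 1 [hswap]
    rw [hS, ← Finset.sum_add_distrib]
    refine Finset.sum_congr rfl ?_
    intro j hj
    simp only [Finset.mem_Icc] at hj
    exact pair_sum n α₀ j hn hα₀ hj.1 hj.2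
  -- the gcd
  set d := Nat.gcd α₀ n with hd
  have hd1 : 1 ≤ d := Nat.gcd_pos_of_pos_right _ hn0
  have hdn : d ∣ n := Nat.gcd_dvd_right _ _
  have hdα : d ∣ α₀ := Nat.gcd_dvd_left _ _
  have hdlen : d ≤ n := Nat.le_of_dvd hn0 hdn
  obtain ⟨m, hm⟩ := hdn
  have hm0 : 0 < m := by
    rcases Nat.eq_zero_or_pos m with h0 | h1
    · exfalso; rw [h0, Nat.mul_zero] at hm; omega
    · exact h1
  obtain ⟨c, hc⟩ := hdα
  have hcop : Nat.Coprime m c := by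
    have := Nat.coprime_div_gcd_div_gcd (m := α₀) (n := n) (by rw [← hd]; omega)
    have hmeq : n / Nat.gcd α₀ n = m := by rw [← hd, hm, Nat.mul_div_cancel_left _ (by omega)]
    have hceq : α₀ / Nat.gcd α₀ n = c := by rw [← hd, hc, Nat.mul_div_cancel_left _ (by omega)]
    rw [hmeq, hceq] at this
    exact this.symm
  have hchar : ∀ j : ℕ, n ∣ j * α₀ ↔ m ∣ j := by
    intro j
    constructor
    · intro hdvd
      rw [hm, hc] at hdvd
      have h2 : d * m ∣ d * (j * c) := by
        have : j * (d * c) = d * (j * c) := by ring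
        rwa [this] at hdvd
      have h3 : m ∣ j * c := (Nat.mul_dvd_mul_iff_left (by omega : 0 < d)).mp h2
      exact hcop.dvd_of_dvd_mul_right h3
    · intro hdvd
      obtain ⟨t, rfl⟩ := hdvd
      rw [hm, hc]
      exact ⟨t * c, by ring⟩
  -- counting
  have hicc : Finset.Icc 1 (n - 1) = Finset.Ioc 0 (n - 1) := Finset.Icc_add_one_left_eq_Ioc 0 (n - 1)
  have hcount : (Finset.filter (fun i => n ∣ i * α₀) (Finset.Icc 1 (n - 1))).card = d - 1 := by
    have h1 : (Finset.filter (fun i => n ∣ i * α₀) (Finset.Icc 1 (n - 1)))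
        = Finset.filter (fun i => m ∣ i) (Finset.Ioc 0 (n - 1)) := by
      rw [hicc]
      apply Finset.filter_congr
      intro x _
      simp [hchar x]
    rw [h1, Nat.Ioc_filter_dvd_card_eq_div]
    -- (n-1)/m = d-1
    have hx : m * (d - 1) + m = m * d := by rw [← Nat.mul_succ]; congr 1; omega
    have hn1 : n - 1 = m * (d - 1) + (m - 1) := by
      have : n = m * d := by rw [hm]; ring
      omega
    rw [hn1, Nat.mul_add_div hm0, Nat.div_eq_of_lt (by omega)]
    omega
  have hcard : (Finset.Icc 1 (n - 1)).card = n - 1 := by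
    rw [Nat.card_Icc]; omega
  have hcount' : (Finset.filter (fun i => ¬ n ∣ i * α₀) (Finset.Icc 1 (n - 1))).card
      = (n - 1) - (d - 1) := by
    have := Finset.card_filter_add_card_filter_not
      (s := Finset.Icc 1 (n - 1)) (p := fun i => n ∣ i * α₀)
    omega
  rw [Finset.sum_ite, Finset.sum_const, Finset.sum_const, hcount, hcount',
    smul_eq_mul, smul_eq_mul] at h2S
  -- now finish by cases
  by_cases hdvd : n ∣ α₀
  · have hdeq : d = n := by rw [hd]; exact Nat.gcd_eq_right hdvd
    rw [if_pos hdvd]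
    rw [hdeq] at h2S
    have hz : (n - 1) - (n - 1) = 0 := by omega
    rw [hz, Nat.zero_mul, Nat.add_zero] at h2S
    omega
  · rw [if_neg hdvd]
    have hdlt : d < n := by
      rcases Nat.lt_or_ge d n with h1 | h1
      · exact h1
      · exfalso; have hdn' : d = n := by omega
        exact hdvd ⟨c, by rw [hc, hdn']⟩
    rw [show (n - 1) - (d - 1) = n - d from by omega] at h2S
    have key : (d - 1) * (α₀ - 2) + (n - d) * (α₀ - 2) = (n - 1) * (α₀ - 2) := by
      rw [← Nat.add_mul]; congr 1; omega
    have key2 : (n - d) * (α₀ - 1) = (n - d) * (α₀ - 2) + (n - d) := by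
      rw [show α₀ - 1 = (α₀ - 2) + 1 from by omega, Nat.mul_add, Nat.mul_one]
    omega
end

section
/- Let p ≥ 3 be prime, and suppose nonnegative integers f_i (for 1 ≤ i ≤ p-1) satisfy: f_i + f'_i = f_j + f'_j for all i,j where f'_i := f_{p-i}, and f_i ≤ e_i with a_i := e_i - f_i satisfying a_i = a_{p-i} for all i, where e_i = ⌊(p-i)α₀/p⌋ or (p-i)α₀/p - 1 according to whether p divides (p-i)α₀ or not, for some α₀ ≥ 4 not necessarily divisible by p. If p ≥ 5 then f_{(p+1)/2} ≥ e_{(p+1)/2} - e_{p-1} > 0. -/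
lemma pair_div_aux (p α₀ a b : ℕ) (hp : p.Prime) (hα : ¬ p ∣ α₀)
    (ha : 1 ≤ a) (hb : 1 ≤ b) (hab : a + b = p) :
    a * α₀ / p + b * α₀ / p + 1 = α₀ := by
  have hp0 := hp.pos
  have hnda : ¬ p ∣ a := fun h => by have := Nat.le_of_dvd (by omega) h; omega
  have hndb : ¬ p ∣ b := fun h => by have := Nat.le_of_dvd (by omega) h; omega
  have hra : a * α₀ % p ≠ 0 := fun h => by
    rcases hp.dvd_mul.mp (Nat.dvd_of_mod_eq_zero h) with h' | h'
    · exact hnda h'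
    · exact hα h'
  have hrb : b * α₀ % p ≠ 0 := fun h => by
    rcases hp.dvd_mul.mp (Nat.dvd_of_mod_eq_zero h) with h' | h'
    · exact hndb h'
    · exact hα h'
  have hda := Nat.div_add_mod (a * α₀) p
  have hdb := Nat.div_add_mod (b * α₀) p
  have hma : a * α₀ % p < p := Nat.mod_lt _ hp0
  have hmb : b * α₀ % p < p := Nat.mod_lt _ hp0
  have hab' : a * α₀ + b * α₀ = p * α₀ := by rw [← add_mul, hab]
  have hsum : p ∣ (a * α₀ % p + b * α₀ % p) := by
    apply Nat.dvd_of_mod_eq_zero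
    rw [← Nat.add_mod, hab']
    exact Nat.mul_mod_right p α₀
  obtain ⟨c, hc⟩ := hsum
  have hc2 : c ≤ 1 := by
    by_contra h
    have : p * 2 ≤ p * c := Nat.mul_le_mul_left p (by omega)
    omega
  have hsum' : a * α₀ % p + b * α₀ % p = p := by
    interval_cases c
    · omega
    · omega
  have key : p * (a * α₀ / p + b * α₀ / p + 1) = p * α₀ := by
    have expand : p * (a * α₀ / p + b * α₀ / p + 1)
        = p * (a * α₀ / p) + p * (b * α₀ / p) + p := by ring
    rw [expand]
    linarith [hda, hdb, hsum', hab']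
  exact Nat.eq_of_mul_eq_mul_left hp0 key

/-- Let `p ≥ 3` be prime and `α₀ ≥ 4` (not necessarily divisible by `p`).  Let
`e i = ⌊(p-i)α₀/p⌋`, resp. `(p-i)α₀/p - 1` if `p ∣ (p-i)α₀`, be the rank of the eigenspace
`E^{1,0}_i`, and let `f i ≤ e i` (ranks of the flat parts `F^{1,0}_i`) be nonnegative
integers satisfying `f i + f (p-i) = f j + f (p-j)` for all `i, j` (Galois action) and
`e i - f i = e (p-i) - f (p-i)` (symmetry of the ample parts `a i = e i - f i`).
If `p ≥ 5`, then `f ((p+1)/2) ≥ e ((p+1)/2) - e (p-1) > 0`. -/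
theorem flat_part_middle_eigenspace_nonzero
    (p α₀ : ℕ) (hp : p.Prime) (hp3 : 3 ≤ p) (hα₀ : 4 ≤ α₀)
    (e f : ℕ → ℕ)
    (he : ∀ i, 1 ≤ i → i ≤ p - 1 →
      e i = if p ∣ (p - i) * α₀ then (p - i) * α₀ / p - 1 else (p - i) * α₀ / p)
    (hfe : ∀ i, 1 ≤ i → i ≤ p - 1 → f i ≤ e i)
    (hgal : ∀ i j, 1 ≤ i → i ≤ p - 1 → 1 ≤ j → j ≤ p - 1 →
      f i + f (p - i) = f j + f (p - j))
    (hsym : ∀ i, 1 ≤ i → i ≤ p - 1 → e i - f i = e (p - i) - f (p - i))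
    (hp5 : 5 ≤ p) :
    e ((p + 1) / 2) - e (p - 1) ≤ f ((p + 1) / 2) ∧ e (p - 1) < e ((p + 1) / 2) := by
  have hp0 := hp.pos
  have hodd : p % 2 = 1 := by
    by_contra h
    have h2 : (2 : ℕ) ∣ p := by omega
    rcases (Nat.Prime.eq_one_or_self_of_dvd hp 2 h2) with h' | h' <;> omega
  obtain ⟨k, hk⟩ : ∃ k, p = 2 * k + 1 := ⟨p / 2, by omega⟩
  have hk2 : 2 ≤ k := by omega
  have hmi : (p + 1) / 2 = k + 1 := by omega
  have hnd : ∀ j, 1 ≤ j → j ≤ p - 1 → ¬ p ∣ j := by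
    intro j h1 h2 hd
    have := Nat.le_of_dvd (by omega) hd
    omega
  have hdvd : ∀ j, 1 ≤ j → j ≤ p - 1 → (p ∣ j * α₀ ↔ p ∣ α₀) := by
    intro j h1 h2
    constructor
    · intro h
      rcases hp.dvd_mul.mp h with h' | h'
      · exact absurd h' (hnd j h1 h2)
      · exact h'
    · exact fun h => h.mul_left j
  have hv : ∀ j, 1 ≤ j → j ≤ p - 1 →
      e j = if p ∣ α₀ then (p - j) * α₀ / p - 1 else (p - j) * α₀ / p := by
    intro j h1 h2
    rw [he j h1 h2]
    simp only [hdvd (p - j) (by omega) (by omega)]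
  have hE1 : e 1 = if p ∣ α₀ then 2 * k * α₀ / p - 1 else 2 * k * α₀ / p := by
    rw [hv 1 (by omega) (by omega), show p - 1 = 2 * k by omega]
  have hEm : e (k + 1) = if p ∣ α₀ then k * α₀ / p - 1 else k * α₀ / p := by
    rw [hv (k + 1) (by omega) (by omega), show p - (k + 1) = k by omega]
  have hEk : e k = if p ∣ α₀ then (k + 1) * α₀ / p - 1 else (k + 1) * α₀ / p := by
    rw [hv k (by omega) (by omega), show p - k = k + 1 by omega]
  have hEp1 : e (p - 1) = if p ∣ α₀ then α₀ / p - 1 else α₀ / p := by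
    rw [hv (p - 1) (by omega) (by omega), show p - (p - 1) = 1 by omega, one_mul]
  have hAB : e 1 + e (p - 1) = e (k + 1) + e k ∧ e (p - 1) < e (k + 1) := by
    by_cases hd : p ∣ α₀
    · obtain ⟨t, ht⟩ := hd
      have ht1 : 1 ≤ t := by
        rcases Nat.eq_zero_or_pos t with h | h
        · subst h; simp at ht; omega
        · exact h
      have hdiv : ∀ j : ℕ, j * α₀ / p = j * t := by
        intro j
        rw [ht, show j * (p * t) = p * (j * t) by ring, Nat.mul_div_cancel_left _ hp0]
      have hd' : p ∣ α₀ := ⟨t, ht⟩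
      have hdiv1 : α₀ / p = t := by rw [ht, Nat.mul_div_cancel_left _ hp0]
      rw [hE1, hEm, hEk, hEp1]
      simp only [hd', if_true, hdiv, hdiv1]
      have e1 : (k + 1) * t = k * t + t := by ring
      have e2 : 2 * k * t = k * t + k * t := by ring
      have e3 : 2 * 1 ≤ k * t := Nat.mul_le_mul hk2 ht1
      have e4 : 2 * t ≤ k * t := Nat.mul_le_mul_right t hk2
      constructor <;> omega
    · rw [hE1, hEm, hEk, hEp1]
      simp only [hd, if_false]
      have hA1 := pair_div_aux p α₀ (2 * k) 1 hp hd (by omega) (by omega) (by omega)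
      have hA2 := pair_div_aux p α₀ k (k + 1) hp hd (by omega) (by omega) (by omega)
      rw [one_mul] at hA1
      have hB : α₀ / p + 1 ≤ k * α₀ / p := by
        rw [Nat.le_div_iff_mul_le hp0]
        by_cases hlt : α₀ < p
        · rw [Nat.div_eq_of_lt hlt]
          have h4 : k * 4 ≤ k * α₀ := Nat.mul_le_mul_left k hα₀
          omega
        · push_neg at hlt
          have hd1 : α₀ / p * p ≤ α₀ := Nat.div_mul_le_self _ _
          have h2a : 2 * α₀ ≤ k * α₀ := Nat.mul_le_mul_right α₀ hk2
          rw [add_mul, one_mul]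
          omega
      constructor <;> omega
  obtain ⟨hA, hB⟩ := hAB
  have hs1 := hsym 1 (by omega) (by omega)
  have hsm := hsym (k + 1) (by omega) (by omega)
  rw [show p - (k + 1) = k by omega] at hsm
  have hg := hgal (k + 1) 1 (by omega) (by omega) (by omega) (by omega)
  rw [show p - (k + 1) = k by omega] at hg
  have hf1 := hfe 1 (by omega) (by omega)
  have hfp1 := hfe (p - 1) (by omega) (by omega)
  have hfm := hfe (k + 1) (by omega) (by omega)
  have hfk := hfe k (by omega) (by omega)
  rw [hmi]
  exact ⟨by omega, hB⟩
end
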